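/- Let u, v ∈ Γ* with u ≈ v. Then the elements of G represented by u and v are conjugate in G; moreover, if u is cyclically reduced then v is cyclically reduced. -/

import Mathlib

/-- The set of commutator relators defining a graph product. -/
def gpRels {L : Type} (I : L → L → Prop) (G : L → Type) [∀ α, Group (G α)] :
    Set (Monoid.CoprodI G) :=
  {x | ∃ (α β : L) (g : G α) (h : G β), I α β ∧
    x = Monoid.CoprodI.of g * Monoid.CoprodI.of h *
        (Monoid.CoprodI.of g)⁻¹ * (Monoid.CoprodI.of h)⁻¹}

/-- The graph product of the groups `G α` over the independence relation `I`. -/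
def GP {L : Type} (I : L → L → Prop) (G : L → Type) [∀ α, Group (G α)] : Type :=
  Monoid.CoprodI G ⧸ Subgroup.normalClosure (gpRels I G)

instance {L : Type} (I : L → L → Prop) (G : L → Type) [∀ α, Group (G α)] :
    Group (GP I G) := QuotientGroup.Quotient.group _

/-- The canonical homomorphism of a node group into the graph product. -/
def gpOf {L : Type} (I : L → L → Prop) (G : L → Type) [∀ α, Group (G α)] (α : L) :
    G α →* GP I G :=
  (QuotientGroup.mk' _).comp Monoid.CoprodI.of

/-- A letter: a nontrivial element of one of the node groups. -/
abbrev Letter (L : Type) (G : L → Type) [∀ α, Group (G α)] : Type :=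
  Σ α : L, {g : G α // g ≠ 1}

variable {L : Type} (I : L → L → Prop) (G : L → Type) [∀ α, Group (G α)]

/-- The element of the graph product represented by a word. -/
def evalWord (w : List (Letter L G)) : GP I G :=
  (w.map fun l => gpOf I G l.1 l.2.1).prod

/-- One elementary commutation step between trace-equivalent words. -/
inductive TraceStep : List (Letter L G) → List (Letter L G) → Prop
  | swap (u v : List (Letter L G)) (a b : Letter L G) (h : I a.1 b.1) :
      TraceStep (u ++ a :: b :: v) (u ++ b :: a :: v)

/-- Trace equivalence: the congruence generated by commuting independent letters. -/
def TraceEquiv : List (Letter L G) → List (Letter L G) → Prop :=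
  Relation.EqvGen (TraceStep I G)

/-- `IndepWord I G β u` means every letter of `u` is independent of `β`,
i.e. `u ∈ I(β)`. -/
def IndepWord (β : L) (u : List (Letter L G)) : Prop := ∀ c ∈ u, I c.1 β

/-- A word is reduced if it contains no factor `b u b'` with `b, b' ∈ Γ_β`
and `u ∈ I(β)`. -/
def Reduced (w : List (Letter L G)) : Prop :=
  ¬ ∃ (β : L) (b b' : {g : G β // g ≠ 1}) (x u y : List (Letter L G)),
      w = x ++ (⟨β, b⟩ : Letter L G) :: (u ++ (⟨β, b'⟩ : Letter L G) :: y) ∧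
      IndepWord I G β u

/-- `|w|_α` : number of letters of `w` in `Γ_α`. -/
noncomputable def countAlpha (α : L) (w : List (Letter L G)) : ℕ :=
  (w.filter fun l => Classical.propDecidable (l.1 = α) |>.decide).length

/-- The alphabet `al(w)` of a word. -/
def alph (w : List (Letter L G)) : Set L := {α | ∃ l ∈ w, l.1 = α}

/-- A reduced word is cyclically reduced if it has no factorization `≡ a v a'`
with `a, a'` letters from the same node group. -/
def IsCyclicallyReduced (w : List (Letter L G)) : Prop :=
  Reduced I G w ∧
  ¬ ∃ (α : L) (a a' : {g : G α // g ≠ 1}) (v : List (Letter L G)),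
      TraceEquiv I G w ((⟨α, a⟩ : Letter L G) :: (v ++ [(⟨α, a'⟩ : Letter L G)]))

/-- Words `u` and `v` are transposed if `u ≡ r s` and `v ≡ s r`. -/
def Transposed (u v : List (Letter L G)) : Prop :=
  ∃ r s : List (Letter L G), TraceEquiv I G u (r ++ s) ∧ TraceEquiv I G v (s ++ r)

/-- `u ≈ v` : the reflexive-transitive closure of transposition. -/
def TransClosure : List (Letter L G) → List (Letter L G) → Prop :=
  Relation.ReflTransGen (Transposed I G)

/-- The formal inverse of a letter. -/
def letterInv (l : Letter L G) : Letter L G :=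
  ⟨l.1, ⟨(l.2 : G l.1)⁻¹, inv_ne_one.mpr l.2.2⟩⟩

/-- The formal inverse `p̄` of a word `p`. -/
def wordInv (w : List (Letter L G)) : List (Letter L G) :=
  (w.map (letterInv G)).reverse

/-- The dependence graph on `L`: distinct nodes are adjacent iff not independent. -/
def depGraph : SimpleGraph L where
  Adj a b := a ≠ b ∧ ¬ I a b ∧ ¬ I b a
  symm := by
    constructor
    intro a b ⟨h1, h2, h3⟩
    exact ⟨h1.symm, h3, h2⟩
  loopless := by constructor; intro a ⟨h1, _⟩; exact h1 rfl

/-- A word is connected if its alphabet induces a connected subgraph of the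
dependence graph. -/
def ConnectedWord (w : List (Letter L G)) : Prop :=
  ((depGraph I).induce (alph G w)).Connected

/-- A word `w` is `α`-reduced if every word with fewer letters from `Γ_α`
represents a different element of the graph product. -/
def AlphaReduced (α : L) (w : List (Letter L G)) : Prop :=
  ∀ w' : List (Letter L G), countAlpha G α w' < countAlpha G α w →
    evalWord I G w' ≠ evalWord I G w

/-!
Commuting independent letters does not change the represented element, and `r s`, `s r` are
conjugate by `s`. For cyclic reducedness, following one letter through commutation steps
(Levi's lemma) shows that reducedness is invariant under `≡` and that `w ≡ a v a'` amounts to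
`w = p a m a' r` with `p, r ∈ I(α)`. In this positional form one sees directly that the rotation
`x c ↦ c x` of a cyclically reduced word creates neither a factor `b u b'` nor such a pair, and
`r s ↦ s r` is a sequence of these rotations.
-/

section

variable {I G}

theorem TraceEquiv.refl (w : List (Letter L G)) : TraceEquiv I G w w :=
  Relation.EqvGen.refl w

theorem TraceEquiv.symm {u v : List (Letter L G)} (h : TraceEquiv I G u v) :
    TraceEquiv I G v u :=
  Relation.EqvGen.symm u v h

theorem TraceEquiv.trans {u v w : List (Letter L G)} (h₁ : TraceEquiv I G u v)
    (h₂ : TraceEquiv I G v w) : TraceEquiv I G u w :=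
  Relation.EqvGen.trans u v w h₁ h₂

theorem TraceStep.traceEquiv {u v : List (Letter L G)} (h : TraceStep I G u v) :
    TraceEquiv I G u v :=
  Relation.EqvGen.rel u v h

theorem TraceEquiv.map {f : List (Letter L G) → List (Letter L G)}
    (hf : ∀ {w w'}, TraceStep I G w w' → TraceEquiv I G (f w) (f w'))
    {u v : List (Letter L G)} (h : TraceEquiv I G u v) : TraceEquiv I G (f u) (f v) := by
  induction h with
  | rel _ _ h => exact hf h
  | refl => exact .refl _
  | symm _ _ _ ih => exact ih.symm
  | trans _ _ _ _ _ ih₁ ih₂ => exact ih₁.trans ih₂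

theorem TraceStep.append_left (x : List (Letter L G)) {u v : List (Letter L G)}
    (h : TraceStep I G u v) : TraceStep I G (x ++ u) (x ++ v) := by
  obtain ⟨p, q, a, b, hab⟩ := h
  simpa using TraceStep.swap (x ++ p) q a b hab

theorem TraceStep.append_right (y : List (Letter L G)) {u v : List (Letter L G)}
    (h : TraceStep I G u v) : TraceStep I G (u ++ y) (v ++ y) := by
  obtain ⟨p, q, a, b, hab⟩ := h
  simpa using TraceStep.swap p (q ++ y) a b hab

theorem TraceStep.perm {u v : List (Letter L G)} (h : TraceStep I G u v) : u.Perm v := by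
  obtain ⟨p, q, a, b, -⟩ := h
  exact (List.Perm.swap b a q).append_left p

theorem TraceStep.symm (hsym : ∀ α β, I α β → I β α) {u v : List (Letter L G)}
    (h : TraceStep I G u v) : TraceStep I G v u := by
  obtain ⟨p, q, a, b, hab⟩ := h
  exact TraceStep.swap p q b a (hsym _ _ hab)

theorem TraceEquiv.append_left (x : List (Letter L G)) {u v : List (Letter L G)}
    (h : TraceEquiv I G u v) : TraceEquiv I G (x ++ u) (x ++ v) :=
  h.map fun hs => (hs.append_left x).traceEquiv

theorem TraceEquiv.reverse {u v : List (Letter L G)} (h : TraceEquiv I G u v) :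
    TraceEquiv I G u.reverse v.reverse := by
  refine h.map fun hs => ?_
  obtain ⟨p, q, a, b, hab⟩ := hs
  simpa using (TraceStep.swap q.reverse p.reverse a b hab).traceEquiv.symm

theorem gpOf_commute {α β : L} (h : I α β) (g : G α) (k : G β) :
    Commute (gpOf I G α g) (gpOf I G β k) := by
  rw [← commutatorElement_eq_one_iff_commute, commutatorElement_def]
  exact (QuotientGroup.eq_one_iff _).mpr (Subgroup.subset_normalClosure ⟨α, β, g, k, h, rfl⟩)

theorem evalWord_append (u v : List (Letter L G)) :
    evalWord I G (u ++ v) = evalWord I G u * evalWord I G v := by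
  simp [evalWord]

theorem TraceEquiv.evalWord_eq {u v : List (Letter L G)} (h : TraceEquiv I G u v) :
    evalWord I G u = evalWord I G v := by
  induction h with
  | rel _ _ h =>
    obtain ⟨p, q, a, b, hab⟩ := h
    simp only [evalWord, List.map_append, List.map_cons, List.prod_append, List.prod_cons]
    rw [(gpOf_commute hab _ _).left_comm]
  | refl => rfl
  | symm _ _ _ ih => exact ih.symm
  | trans _ _ _ _ _ ih₁ ih₂ => exact ih₁.trans ih₂

theorem Transposed.isConj {u v : List (Letter L G)} (h : Transposed I G u v) :
    IsConj (evalWord I G u) (evalWord I G v) := by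
  obtain ⟨r, s, hu, hv⟩ := h
  rw [hu.evalWord_eq, hv.evalWord_eq, evalWord_append, evalWord_append]
  exact isConj_iff.mpr ⟨evalWord I G s, by group⟩

theorem IndepWord.of_subset {β : L} {u v : List (Letter L G)} (hu : IndepWord I G β u)
    (hvu : v ⊆ u) : IndepWord I G β v :=
  fun c hc => hu c (hvu hc)

theorem traceEquiv_append_cons {p q : List (Letter L G)} {l : Letter L G}
    (hp : IndepWord I G l.1 p) : TraceEquiv I G (p ++ l :: q) (l :: (p ++ q)) := by
  induction p with
  | nil => exact .refl _
  | cons c p ih =>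
    have hcl : TraceStep I G (c :: l :: (p ++ q)) (l :: c :: (p ++ q)) :=
      TraceStep.swap [] _ c l (hp c List.mem_cons_self)
    exact ((ih (hp.of_subset (List.subset_cons_self c p))).append_left [c]).trans
      hcl.traceEquiv

theorem TraceStep.eq_append_cons_cases {w w' p q : List (Letter L G)} {l : Letter L G}
    (h : TraceStep I G w w') (hw : w = p ++ l :: q) :
    (∃ b v, q = b :: v ∧ I l.1 b.1 ∧ w' = p ++ b :: l :: v) ∨
    (∃ u a, p = u ++ [a] ∧ I a.1 l.1 ∧ w' = u ++ l :: a :: q) ∨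
    (∃ p', TraceStep I G p p' ∧ w' = p' ++ l :: q) ∨
    (∃ q', TraceStep I G q q' ∧ w' = p ++ l :: q') := by
  obtain ⟨u, v, a, b, hab⟩ := h
  rcases List.append_eq_append_iff.mp hw with ⟨s, rfl, hs⟩ | ⟨s, rfl, hs⟩
  · rcases s with _ | ⟨c, _ | ⟨d, s⟩⟩ <;>
      simp only [List.nil_append, List.cons_append, List.cons.injEq] at hs
    · obtain ⟨rfl, rfl⟩ := hs
      exact .inl ⟨b, v, rfl, hab, by simp⟩
    · obtain ⟨rfl, rfl, rfl⟩ := hs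
      exact .inr (.inl ⟨u, a, rfl, hab, by simp⟩)
    · obtain ⟨rfl, rfl, rfl⟩ := hs
      exact .inr (.inr (.inl ⟨u ++ b :: a :: s, by simpa using .swap u s a b hab, by simp⟩))
  · rcases s with _ | ⟨c, s⟩ <;>
      simp only [List.nil_append, List.cons_append, List.cons.injEq] at hs
    · obtain ⟨rfl, rfl⟩ := hs
      exact .inl ⟨b, v, rfl, hab, by simp⟩
    · obtain ⟨rfl, rfl⟩ := hs
      exact .inr (.inr (.inr ⟨s ++ b :: a :: v, .swap s v a b hab, by simp⟩))

theorem TraceStep.exists_indepWord_prefix (hsym : ∀ α β, I α β → I β α)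
    {w w' p q : List (Letter L G)} {l : Letter L G} (h : TraceStep I G w w')
    (hw : w = p ++ l :: q) (hp : IndepWord I G l.1 p) :
    ∃ p' q', w' = p' ++ l :: q' ∧ IndepWord I G l.1 p' ∧
      TraceEquiv I G (p' ++ q') (p ++ q) := by
  rcases h.eq_append_cons_cases hw with
    ⟨b, v, rfl, hlb, rfl⟩ | ⟨u, a, rfl, -, rfl⟩ | ⟨p', hp', rfl⟩ | ⟨q', hq', rfl⟩
  · refine ⟨p ++ [b], v, by simp, ?_, by simpa using .refl _⟩
    simpa [IndepWord, or_imp, forall_and] using ⟨hp, hsym _ _ hlb⟩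
  · exact ⟨u, a :: q, rfl, hp.of_subset (by simp), by simpa using .refl _⟩
  · exact ⟨p', q, rfl, hp.of_subset hp'.perm.symm.subset,
      (hp'.append_right q).traceEquiv.symm⟩
  · exact ⟨p, q', rfl, hp, (hq'.append_left p).traceEquiv.symm⟩

/-- Levi's lemma for the first letter. -/
theorem TraceEquiv.exists_eq_append_cons (hsym : ∀ α β, I α β → I β α)
    {t w : List (Letter L G)} {l : Letter L G} (h : TraceEquiv I G (l :: t) w) :
    ∃ p q, w = p ++ l :: q ∧ IndepWord I G l.1 p ∧ TraceEquiv I G (p ++ q) t := by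
  have : Std.Symm (TraceStep I G) := ⟨fun _ _ => TraceStep.symm hsym⟩
  have h' : Relation.ReflTransGen (TraceStep I G) (l :: t) w := by
    rwa [← Relation.EqvGen.eqvGen_eq_reflTransGen]
  clear h
  induction h' with
  | refl => exact ⟨[], t, rfl, by simp [IndepWord], .refl _⟩
  | tail _ hs ih =>
    obtain ⟨p, q, hw, hp, hpq⟩ := ih
    obtain ⟨p', q', rfl, hp', hpq'⟩ := hs.exists_indepWord_prefix hsym hw hp
    exact ⟨p', q', rfl, hp', hpq'.trans hpq⟩

theorem TraceEquiv.exists_eq_append_cons_of_append_singleton (hsym : ∀ α β, I α β → I β α)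
    {t w : List (Letter L G)} {l : Letter L G} (h : TraceEquiv I G (t ++ [l]) w) :
    ∃ p q, w = p ++ l :: q ∧ IndepWord I G l.1 q ∧ TraceEquiv I G (p ++ q) t := by
  have hrev : TraceEquiv I G (l :: t.reverse) w.reverse := by simpa using h.reverse
  obtain ⟨p, q, hw, hp, hpq⟩ := hrev.exists_eq_append_cons hsym
  refine ⟨q.reverse, p.reverse, ?_, hp.of_subset fun c => List.mem_reverse.mp, ?_⟩
  · simpa using congrArg List.reverse hw
  · simpa using hpq.reverse

theorem TraceStep.not_reduced (hsym : ∀ α β, I α β → I β α) {w w' : List (Letter L G)}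
    (h : TraceStep I G w w') (hw : ¬ Reduced I G w) : ¬ Reduced I G w' := by
  rw [Reduced, not_not] at hw ⊢
  obtain ⟨β, b, b', x, m, y, rfl, hm⟩ := hw
  rcases h.eq_append_cons_cases rfl with
    ⟨c, v, hv, -, rfl⟩ | ⟨u, a, rfl, ha, rfl⟩ | ⟨x', -, rfl⟩ | ⟨q', hq', rfl⟩
  · rcases m with _ | ⟨d, m⟩ <;>
      simp only [List.nil_append, List.cons_append, List.cons.injEq] at hv
    · obtain ⟨rfl, rfl⟩ := hv
      exact ⟨β, b', b, x, [], y, rfl, by simp [IndepWord]⟩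
    · obtain ⟨rfl, rfl⟩ := hv
      exact ⟨β, b, b', x ++ [d], m, y, by simp, hm.of_subset (by simp)⟩
  · refine ⟨β, b, b', u, a :: m, y, by simp, ?_⟩
    simpa [IndepWord] using ⟨ha, hm⟩
  · exact ⟨β, b, b', x', m, y, rfl, hm⟩
  · obtain ⟨m', y', rfl, hm', -⟩ := hq'.exists_indepWord_prefix hsym rfl hm
    exact ⟨β, b, b', x, m', y', rfl, hm'⟩

theorem TraceEquiv.reduced_iff (hsym : ∀ α β, I α β → I β α) {u v : List (Letter L G)}
    (h : TraceEquiv I G u v) : Reduced I G u ↔ Reduced I G v := by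
  induction h with
  | rel _ _ h => exact not_iff_not.mp ⟨h.not_reduced hsym, (h.symm hsym).not_reduced hsym⟩
  | refl => exact .rfl
  | symm _ _ _ ih => exact ih.symm
  | trans _ _ _ _ _ ih₁ ih₂ => exact ih₁.trans ih₂

variable (I G) in
def HasCyclicRedex (w : List (Letter L G)) : Prop :=
  ∃ (α : L) (a a' : {g : G α // g ≠ 1}) (p m r : List (Letter L G)),
    w = p ++ (⟨α, a⟩ : Letter L G) :: (m ++ (⟨α, a'⟩ : Letter L G) :: r) ∧
      IndepWord I G α p ∧ IndepWord I G α r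

theorem hasCyclicRedex_iff (hsym : ∀ α β, I α β → I β α) {w : List (Letter L G)} :
    HasCyclicRedex I G w ↔ ∃ (α : L) (a a' : {g : G α // g ≠ 1}) (v : List (Letter L G)),
      TraceEquiv I G w ((⟨α, a⟩ : Letter L G) :: (v ++ [(⟨α, a'⟩ : Letter L G)])) := by
  constructor
  · rintro ⟨α, a, a', p, m, r, rfl, hp, hr⟩
    refine ⟨α, a, a', p ++ m ++ r, (traceEquiv_append_cons hp).trans ?_⟩
    simpa using (((traceEquiv_append_cons (q := []) hr).symm.append_left (p ++ m)).append_left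
      [(⟨α, a⟩ : Letter L G)])
  · rintro ⟨α, a, a', v, h⟩
    obtain ⟨p, q, rfl, hp, hpq⟩ := h.symm.exists_eq_append_cons hsym
    obtain ⟨p₂, q₂, hpq₂, hq₂, -⟩ :=
      hpq.symm.exists_eq_append_cons_of_append_singleton hsym
    rcases List.append_eq_append_iff.mp hpq₂ with ⟨s, rfl, rfl⟩ | ⟨s, rfl, hs⟩
    · exact ⟨α, a, a', p, s, q₂, rfl, hp, hq₂⟩
    rcases s with _ | ⟨c, s⟩ <;>
      simp only [List.nil_append, List.cons_append, List.cons.injEq] at hs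
    · exact ⟨α, a, a', p₂, [], q₂, by simp [hs], hp.of_subset (by simp), hq₂⟩
    -- here `a'` lies before `a`, and the pair is read in the other order
    · obtain ⟨rfl, rfl⟩ := hs
      exact ⟨α, a', a, p₂, s, q, by simp, hp.of_subset (by simp), hq₂.of_subset (by simp)⟩

theorem isCyclicallyReduced_iff (hsym : ∀ α β, I α β → I β α) {w : List (Letter L G)} :
    IsCyclicallyReduced I G w ↔ Reduced I G w ∧ ¬ HasCyclicRedex I G w :=
  and_congr_right' (not_congr (hasCyclicRedex_iff hsym).symm)

theorem IsCyclicallyReduced.of_traceEquiv (hsym : ∀ α β, I α β → I β α)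
    {u v : List (Letter L G)} (h : TraceEquiv I G u v) (hu : IsCyclicallyReduced I G u) :
    IsCyclicallyReduced I G v :=
  ⟨(h.reduced_iff hsym).mp hu.1,
    fun ⟨α, a, a', m, hv⟩ => hu.2 ⟨α, a, a', m, h.trans hv⟩⟩

theorem IsCyclicallyReduced.cons_of_append_singleton (hsym : ∀ α β, I α β → I β α)
    {x : List (Letter L G)} {c : Letter L G} (h : IsCyclicallyReduced I G (x ++ [c])) :
    IsCyclicallyReduced I G (c :: x) := by
  rw [isCyclicallyReduced_iff hsym] at h ⊢
  obtain ⟨hred, hredex⟩ := h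
  constructor
  · rintro ⟨β, b, b', _ | ⟨d, y⟩, m, z, hw, hm⟩ <;>
      simp only [List.nil_append, List.cons_append, List.cons.injEq] at hw <;>
      obtain ⟨rfl, rfl⟩ := hw
    · exact hredex ⟨β, b', b, m, z, [], by simp, hm, by simp [IndepWord]⟩
    · exact hred ⟨β, b, b', y, m, z ++ [c], by simp, hm⟩
  · rintro ⟨α, a, a', _ | ⟨d, p⟩, m, r, hw, hp, hr⟩ <;>
      simp only [List.nil_append, List.cons_append, List.cons.injEq] at hw <;>
      obtain ⟨rfl, rfl⟩ := hw
    · exact hred ⟨α, a', a, m, r, [], by simp, hr⟩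
    · refine hredex ⟨α, a, a', p, m, r ++ [c], by simp, hp.of_subset (by simp), ?_⟩
      simpa [IndepWord, or_imp, forall_and] using ⟨hr, hp c List.mem_cons_self⟩

theorem IsCyclicallyReduced.append_comm (hsym : ∀ α β, I α β → I β α)
    {r s : List (Letter L G)} (h : IsCyclicallyReduced I G (r ++ s)) :
    IsCyclicallyReduced I G (s ++ r) := by
  induction s using List.reverseRecOn generalizing r with
  | nil => simpa using h
  | append_singleton s c ih =>
    simpa using ih (r := c :: r) (.cons_of_append_singleton hsym (by simpa using h))

theorem Transposed.isCyclicallyReduced (hsym : ∀ α β, I α β → I β α)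
    {u v : List (Letter L G)} (h : Transposed I G u v) (hu : IsCyclicallyReduced I G u) :
    IsCyclicallyReduced I G v := by
  obtain ⟨r, s, hur, hvs⟩ := h
  exact ((hu.of_traceEquiv hsym hur).append_comm hsym).of_traceEquiv hsym hvs.symm

end

theorem transposition_closure_implies_conjugate_general
    {L : Type} (I : L → L → Prop) (G : L → Type) [∀ α, Group (G α)]
    (hsym : ∀ α β, I α β → I β α)
    (u v : List (Letter L G)) (huv : TransClosure I G u v) :
    IsConj (evalWord I G u) (evalWord I G v) ∧
    (IsCyclicallyReduced I G u → IsCyclicallyReduced I G v) := by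
  induction huv with
  | refl => exact ⟨.refl _, id⟩
  | tail _ h ih => exact ⟨ih.1.trans h.isConj, fun hu => h.isCyclicallyReduced hsym (ih.2 hu)⟩

theorem transposition_closure_implies_conjugate
    {L : Type} [Finite L] (I : L → L → Prop) (G : L → Type) [∀ α, Group (G α)]
    (hirr : ∀ α, ¬ I α α) (hsym : ∀ α β, I α β → I β α)
    (u v : List (Letter L G)) (huv : TransClosure I G u v) :
    IsConj (evalWord I G u) (evalWord I G v) ∧
    (IsCyclicallyReduced I G u → IsCyclicallyReduced I G v) :=
  transposition_closure_implies_conjugate_general I G hsym u v huv
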